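/- arXiv:2110.08724 — 5 statements merged into one kernel-verified Lean document; each statement's English description precedes it below -/
import Mathlib

section
/- Let G be a graph and let G' be obtained from G by adding a new vertex adjacent to exactly one vertex of G (attaching a pendant edge). Then ι(G', B2) = ι(G, B2). -/
open SimpleGraph

/-- `H` is contained in `G` as a (not necessarily induced) subgraph. -/
def ContainsSub {V : Type*} {W : Type*} (G : SimpleGraph V) (H : SimpleGraph W) : Prop :=
  ∃ f : W → V, Function.Injective f ∧ ∀ a b, H.Adj a b → G.Adj (f a) (f b)

/-- The diamond graph `B₂`: `K₄` minus one edge. -/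
def Diamond : SimpleGraph (Fin 4) :=
  (completeGraph (Fin 4)).deleteEdges {s(0, 1)}

/-- A graph is diamond-free if it contains no subgraph isomorphic to the diamond. -/
def DiamondFree {V : Type*} (G : SimpleGraph V) : Prop := ¬ ContainsSub G Diamond

/-- The closed neighborhood `N[S]` of a set of vertices. -/
def closedNbhd {V : Type*} (G : SimpleGraph V) (S : Set V) : Set V :=
  {v | v ∈ S ∨ ∃ u ∈ S, G.Adj u v}

/-- `S` is a `B₂`-isolating set of `G`. -/
def IsIsolatingB2 {V : Type*} (G : SimpleGraph V) (S : Set V) : Prop :=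
  DiamondFree (G.induce (closedNbhd G S)ᶜ)

/-- The `B₂`-isolation number `ι(G, B₂)`. -/
noncomputable def iotaB2 {V : Type*} (G : SimpleGraph V) : ℕ :=
  sInf {k | ∃ S : Set V, IsIsolatingB2 G S ∧ S.ncard = k}

/-- The exceptional graph `Y`: the square of the 9-cycle (4-regular on 9 vertices). -/
def Ygraph : SimpleGraph (ZMod 9) :=
  SimpleGraph.fromRel (fun a b => a - b = 1 ∨ a - b = 2)

/-- The graph obtained from `G` by attaching a pendant vertex to `v0`. -/
def pendant {V : Type*} (G : SimpleGraph V) (v0 : V) : SimpleGraph (Option V) :=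
  SimpleGraph.fromRel (fun a b =>
    (∃ x y, a = some x ∧ b = some y ∧ G.Adj x y) ∨ (a = none ∧ b = some v0))

lemma pendant_adj_some {V : Type*} (G : SimpleGraph V) (v0 : V) (x y : V) :
    (pendant G v0).Adj (some x) (some y) ↔ G.Adj x y := by
  constructor
  · rintro ⟨hne, h | h⟩
    · rcases h with ⟨a, b, ha, hb, hab⟩ | ⟨h, -⟩ <;> aesop
    · rcases h with ⟨a, b, ha, hb, hab⟩ | ⟨h, -⟩
      · obtain rfl : y = a := by injection ha
        obtain rfl : x = b := by injection hb
        exact hab.symm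
      · simp at h
  · intro h
    exact ⟨by simpa using h.ne, Or.inl (Or.inl ⟨x, y, rfl, rfl, h⟩)⟩

lemma pendant_adj_none {V : Type*} (G : SimpleGraph V) (v0 : V) (b : Option V) :
    (pendant G v0).Adj none b ↔ b = some v0 := by
  constructor
  · rintro ⟨hne, h | h⟩ <;> aesop
  · rintro rfl
    exact ⟨by simp, Or.inl (Or.inr ⟨rfl, rfl⟩)⟩

lemma diamond_adj (a b : Fin 4) :
    Diamond.Adj a b ↔ a ≠ b ∧ ¬(a = 0 ∧ b = 1) ∧ ¬(a = 1 ∧ b = 0) := by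
  simp [Diamond, deleteEdges_adj, completeGraph, Sym2.eq_iff]

lemma diamond_two_nbrs :
    ∀ i : Fin 4, ∃ j k : Fin 4, j ≠ k ∧ Diamond.Adj i j ∧ Diamond.Adj i k := by
  simp only [diamond_adj]; decide

lemma isolating_pendant {V : Type*} (G : SimpleGraph V) (v0 : V) (S : Set V)
    (hS : IsIsolatingB2 G S) : IsIsolatingB2 (pendant G v0) (some '' S) := by
  rintro ⟨f, hinj, hadj⟩
  by_cases hn : ∃ i : Fin 4, ((f i : Option V) : Option V) = none
  · obtain ⟨i, hi⟩ := hn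
    obtain ⟨j, k, hjk, hij, hik⟩ := diamond_two_nbrs i
    have hj := hadj _ _ hij
    have hk := hadj _ _ hik
    simp only [comap_adj, Function.Embedding.coe_subtype] at hj hk
    rw [show ((f i : Option V)) = none from hi, pendant_adj_none] at hj hk
    exact hjk (hinj (Subtype.ext (hj.trans hk.symm)))
  · push_neg at hn
    have hs : ∀ i : Fin 4, ∃ x : V, (f i : Option V) = some x := fun i => by
      cases h : (f i : Option V) with
      | none => exact absurd h (hn i)
      | some x => exact ⟨x, rfl⟩
    choose g hg using hs
    have hgmem : ∀ i, g i ∈ (closedNbhd G S)ᶜ := by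
      intro i hmem
      apply (f i).2
      rcases hmem with h | ⟨u, hu, hadj'⟩
      · exact Or.inl (by rw [hg i]; exact ⟨g i, h, rfl⟩)
      · refine Or.inr ⟨some u, ⟨u, hu, rfl⟩, ?_⟩
        rw [hg i]
        exact (pendant_adj_some G v0 u (g i)).2 hadj'
    apply hS
    refine ⟨fun i => ⟨g i, hgmem i⟩, ?_, ?_⟩
    · intro a b hab
      apply hinj
      apply Subtype.ext
      rw [hg a, hg b]
      exact congrArg some (congrArg Subtype.val hab)
    · intro a b hab
      have := hadj a b hab
      simp only [comap_adj, Function.Embedding.coe_subtype] at this ⊢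
      rw [hg a, hg b, pendant_adj_some] at this
      exact this

lemma isolating_of_pendant {V : Type*} (G : SimpleGraph V) (v0 : V) (S' : Set (Option V))
    (hS' : IsIsolatingB2 (pendant G v0) S') :
    IsIsolatingB2 G ((fun o : Option V => o.elim v0 id) '' S') := by
  set S : Set V := (fun o : Option V => o.elim v0 id) '' S'
  rintro ⟨f, hinj, hadj⟩
  have key : ∀ v : V, v ∈ (closedNbhd G S)ᶜ → some v ∈ (closedNbhd (pendant G v0) S')ᶜ := by
    intro v hv hmem
    apply hv
    rcases hmem with h | ⟨u, hu, hadj'⟩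
    · exact Or.inl ⟨some v, h, rfl⟩
    · cases u with
      | none =>
        have : v = v0 := by
          have := (pendant_adj_none G v0 (some v)).1 hadj'
          injection this
        exact Or.inl ⟨none, hu, this.symm⟩
      | some u =>
        exact Or.inr ⟨u, ⟨some u, hu, rfl⟩, (pendant_adj_some G v0 u v).1 hadj'⟩
  apply hS'
  refine ⟨fun i => ⟨some (f i : V), key _ (f i).2⟩, ?_, ?_⟩
  · intro a b hab
    apply hinj
    apply Subtype.ext
    have : some ((f a : V)) = some ((f b : V)) := congrArg Subtype.val hab
    injection this
  · intro a b hab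
    have := hadj a b hab
    simp only [comap_adj, Function.Embedding.coe_subtype] at this ⊢
    exact (pendant_adj_some G v0 _ _).2 this

lemma isolating_univ {V : Type*} (G : SimpleGraph V) : IsIsolatingB2 G Set.univ := by
  rintro ⟨f, -, -⟩
  have h := (f 0).2
  exact h (Or.inl trivial)

theorem iotaB2_pendant {V : Type*} [Fintype V] (G : SimpleGraph V) (v0 : V) :
    iotaB2 (pendant G v0) = iotaB2 G := by
  have hne1 : {k | ∃ S : Set V, IsIsolatingB2 G S ∧ S.ncard = k}.Nonempty :=
    ⟨_, Set.univ, isolating_univ G, rfl⟩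
  have hne2 : {k | ∃ S : Set (Option V), IsIsolatingB2 (pendant G v0) S ∧ S.ncard = k}.Nonempty :=
    ⟨_, Set.univ, isolating_univ _, rfl⟩
  apply le_antisymm
  · obtain ⟨S, hS, hcard⟩ := Nat.sInf_mem hne1
    calc iotaB2 (pendant G v0) ≤ (some '' S).ncard :=
          Nat.sInf_le ⟨some '' S, isolating_pendant G v0 S hS, rfl⟩
      _ = S.ncard := Set.ncard_image_of_injective S (Option.some_injective V)
      _ = iotaB2 G := hcard
  · obtain ⟨S', hS', hcard⟩ := Nat.sInf_mem hne2
    calc iotaB2 G ≤ ((fun o : Option V => o.elim v0 id) '' S').ncard :=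
          Nat.sInf_le ⟨_, isolating_of_pendant G v0 S' hS', rfl⟩
      _ ≤ S'.ncard := Set.ncard_image_le (Set.toFinite S')
      _ = iotaB2 (pendant G v0) := hcard
end

section
/- There exists a connected graph G of order 15 whose minimum B2-isolating set has cardinality exactly 3, i.e., ι(G, B2) = 3 = |V(G)|/5, showing the bound n/5 is attained. -/
open SimpleGraph

def Gr : SimpleGraph (Fin 15) :=
  SimpleGraph.fromRel (fun a b => a.val / 5 = b.val / 5 ∨ (a.val % 5 = 4 ∧ b.val % 5 = 4))

instance : DecidableRel Gr.Adj :=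
  fun a b => decidable_of_iff _ (SimpleGraph.fromRel_adj _ a b).symm

lemma gr_adj_iff (a b : Fin 15) : Gr.Adj a b ↔ a ≠ b ∧
    ((a.val / 5 = b.val / 5 ∨ (a.val % 5 = 4 ∧ b.val % 5 = 4)) ∨
     (b.val / 5 = a.val / 5 ∨ (b.val % 5 = 4 ∧ a.val % 5 = 4))) :=
  SimpleGraph.fromRel_adj _ a b

-- cross-block non-adjacency
lemma not_adj_cross {a x : Fin 15} (h1 : a.val / 5 ≠ x.val / 5) (h2 : x.val % 5 ≤ 3) :
    ¬ Gr.Adj a x := by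
  rw [gr_adj_iff]
  rintro ⟨-, (h | h) | (h | h)⟩ <;> omega

-- within-block adjacency
lemma adj_block {a b : Fin 15} (h : a.val / 5 = b.val / 5) (hne : a ≠ b) : Gr.Adj a b := by
  rw [gr_adj_iff]; exact ⟨hne, Or.inl (Or.inl h)⟩

lemma pair_not_isolating (u v : Fin 15) :
    ContainsSub (Gr.induce (closedNbhd Gr {u, v})ᶜ) Diamond := by
  set i : ℕ := if u.val / 5 ≠ 0 ∧ v.val / 5 ≠ 0 then 0
    else if u.val / 5 ≠ 1 ∧ v.val / 5 ≠ 1 then 1 else 2 with hi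
  have hu5 : u.val < 15 := u.isLt
  have hv5 : v.val < 15 := v.isLt
  have hiprop : i ≤ 2 ∧ i ≠ u.val / 5 ∧ i ≠ v.val / 5 := by
    rw [hi]; split_ifs <;> omega
  obtain ⟨hi2, hiu, hiv⟩ := hiprop
  have hj4 : ∀ j : Fin 4, j.val ≤ 3 := fun j => by omega
  let g : Fin 4 → Fin 15 := fun j => ⟨5 * i + j.val, by have := hj4 j; omega⟩
  have hgval : ∀ j, (g j).val = 5 * i + j.val := fun j => rfl
  have hgdiv : ∀ j, (g j).val / 5 = i := fun j => by rw [hgval]; have := hj4 j; omega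
  have hgmod : ∀ j, (g j).val % 5 ≤ 3 := fun j => by rw [hgval]; have := hj4 j; omega
  have hginj : Function.Injective g := by
    intro a b h
    have h2 := congrArg Fin.val h
    rw [hgval, hgval] at h2
    exact Fin.ext (by omega)
  have hmem : ∀ j : Fin 4, g j ∈ (closedNbhd Gr {u, v})ᶜ := by
    intro j
    intro hmemc
    rcases hmemc with hS | ⟨w, hw, hadj⟩
    · have hj := hj4 j
      rcases (hS : g j = u ∨ g j = v) with h | h <;>
        · have h2 := congrArg Fin.val h
          rw [hgval] at h2
          omega
    · rcases (hw : w = u ∨ w = v) with rfl | rfl <;>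
        exact not_adj_cross (by rw [hgdiv]; omega) (hgmod j) hadj
  refine ⟨fun j => ⟨g j, hmem j⟩, ?_, ?_⟩
  · intro a b hab
    exact hginj (congrArg Subtype.val hab)
  · intro a b hab
    have hne : a ≠ b := Diamond.ne_of_adj hab
    show Gr.Adj (g a) (g b)
    exact adj_block (by rw [hgdiv, hgdiv]) (fun h => hne (hginj h))

instance : DecidablePred (· ∈ ({0, 5, 10} : Set (Fin 15))) :=
  fun x => inferInstanceAs (Decidable (x = 0 ∨ x = 5 ∨ x = 10))

instance (S : Set (Fin 15)) [DecidablePred (· ∈ S)] :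
    DecidablePred (· ∈ closedNbhd Gr S) :=
  fun x => inferInstanceAs (Decidable (x ∈ S ∨ ∃ u, u ∈ S ∧ Gr.Adj u x))

lemma cover : ∀ x : Fin 15, x ∈ closedNbhd Gr {0, 5, 10} := by decide

lemma isolating_triple : IsIsolatingB2 Gr {0, 5, 10} := by
  rintro ⟨f, -, -⟩
  exact (f 0).2 (cover (f 0).1)

lemma mono_isolating {S : Set (Fin 15)} {u v : Fin 15} (hsub : S ⊆ {u, v}) :
    ¬ IsIsolatingB2 Gr S := by
  intro hiso
  obtain ⟨f, hinj, hadj⟩ := pair_not_isolating u v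
  have hsub2 : (closedNbhd Gr {u, v})ᶜ ⊆ (closedNbhd Gr S)ᶜ := by
    intro x hx hmem
    apply hx
    rcases hmem with h | ⟨w, hw, h⟩
    · exact Or.inl (hsub h)
    · exact Or.inr ⟨w, hsub hw, h⟩
  refine hiso ⟨fun j => ⟨(f j).1, hsub2 (f j).2⟩, ?_, fun a b hab => hadj a b hab⟩
  intro a b hab
  simp only [Subtype.mk.injEq] at hab
  exact hinj (Subtype.ext hab)

theorem exists_order15_iotaB2_eq_three :
    ∃ G : SimpleGraph (Fin 15), G.Connected ∧ iotaB2 G = 3 := by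
  refine ⟨Gr, ⟨(by decide : Gr.Preconnected)⟩, ?_⟩
  have h3 : 3 ∈ {k | ∃ S : Set (Fin 15), IsIsolatingB2 Gr S ∧ S.ncard = 3} :=
    ⟨{0, 5, 10}, isolating_triple, Set.ncard_eq_three.mpr
      ⟨0, 5, 10, by decide, by decide, by decide, rfl⟩⟩
  refine le_antisymm (Nat.sInf_le h3) (le_csInf ⟨3, h3⟩ ?_)
  rintro k ⟨S, hiso, rfl⟩
  by_contra hk
  push_neg at hk
  have hfin : S.Finite := S.toFinite
  interval_cases h : S.ncard
  · have : S = ∅ := (Set.ncard_eq_zero hfin).mp h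
    exact mono_isolating (this ▸ (Set.empty_subset _ : (∅ : Set (Fin 15)) ⊆ {0, 0})) hiso
  · obtain ⟨a, ha⟩ := Set.ncard_eq_one.mp h
    exact mono_isolating (u := a) (v := a) (by simp [ha]) hiso
  · obtain ⟨a, b, -, hab⟩ := Set.ncard_eq_two.mp h
    exact mono_isolating (u := a) (v := b) (by simp [hab]) hiso
end

section
/- For every positive integer k there exists a connected graph G of order n = 5k with ι(G, B2) = n/5. -/
open SimpleGraph

namespace ExtremalB2

/-- Relation: within a copy `v/5`, roles `0..3` form a K4, role 4 is a pendant attached to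
role 3, and consecutive pendants are joined. -/
def rel (k : ℕ) (v w : Fin (5 * k)) : Prop :=
  (v.val / 5 = w.val / 5 ∧ v.val % 5 < 4 ∧ w.val % 5 < 4) ∨
  (v.val / 5 = w.val / 5 ∧ v.val % 5 = 3 ∧ w.val % 5 = 4) ∨
  (w.val / 5 = v.val / 5 + 1 ∧ v.val % 5 = 4 ∧ w.val % 5 = 4)

def Gk (k : ℕ) : SimpleGraph (Fin (5 * k)) := SimpleGraph.fromRel (rel k)

lemma idx_lt {k : ℕ} (v : Fin (5 * k)) : v.val / 5 < k := by
  have := v.isLt; omega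

/-- The vertex of copy `i` with role `j`. -/
def vtx {k : ℕ} (i j : ℕ) (hi : i < k) (hj : j < 5) : Fin (5 * k) :=
  ⟨5 * i + j, by omega⟩

lemma vtx_val {k : ℕ} (i j : ℕ) (hi : i < k) (hj : j < 5) :
    (vtx i j hi hj : Fin (5 * k)).val = 5 * i + j := rfl

lemma adj_iff {k : ℕ} (v w : Fin (5 * k)) :
    (Gk k).Adj v w ↔ v ≠ w ∧ (rel k v w ∨ rel k w v) := SimpleGraph.fromRel_adj _ v w

/-- A neighbor of a non-pendant vertex lies in the same copy. -/
lemma adj_same_copy {k : ℕ} {u v : Fin (5 * k)} (h : (Gk k).Adj u v)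
    (hv : v.val % 5 < 4) : u.val / 5 = v.val / 5 := by
  rw [adj_iff] at h
  rcases h.2 with h' | h' <;> unfold rel at h' <;> omega

theorem main (k : ℕ) (hk : 0 < k) :
    ∃ G : SimpleGraph (Fin (5 * k)), G.Connected ∧ iotaB2 G = k := by
  refine ⟨Gk k, ?_, ?_⟩
  · -- Connectivity
    rw [SimpleGraph.connected_iff]
    constructor
    · -- every vertex is reachable from its copy's pendant
      have reachP : ∀ v : Fin (5 * k),
          (Gk k).Reachable v (vtx (v.val / 5) 4 (idx_lt v) (by omega)) := by
        intro v
        by_cases h4 : v.val % 5 = 4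
        · have : v = vtx (v.val / 5) 4 (idx_lt v) (by omega) := by
            apply Fin.ext; simp only [vtx_val]; omega
          rw [← this]
        · have hstep2 : (Gk k).Adj (vtx (v.val / 5) 3 (idx_lt v) (by omega))
              (vtx (v.val / 5) 4 (idx_lt v) (by omega)) := by
            rw [adj_iff]
            constructor
            · intro h; have := congrArg Fin.val h; simp only [vtx_val] at this; omega
            · left; right; left; simp only [vtx_val]; omega
          have r1 : (Gk k).Reachable v (vtx (v.val / 5) 3 (idx_lt v) (by omega)) := by
            by_cases hv3 : v = vtx (v.val / 5) 3 (idx_lt v) (by omega)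
            · nth_rewrite 1 [hv3]
              exact SimpleGraph.Reachable.refl _
            · refine SimpleGraph.Adj.reachable ?_
              rw [adj_iff]
              refine ⟨hv3, Or.inl ?_⟩
              left
              simp only [rel, vtx_val]
              omega
          exact r1.trans hstep2.reachable
      -- pendants form a path: pendant i reachable from pendant 0
      have reachPath : ∀ i : ℕ, ∀ hi : i < k,
          (Gk k).Reachable (vtx 0 4 hk (by omega)) (vtx i 4 hi (by omega)) := by
        intro i
        induction i with
        | zero => intro hi; rfl
        | succ n ih =>
          intro hi
          have hn : n < k := by omega
          refine (ih hn).trans (SimpleGraph.Adj.reachable ?_)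
          rw [adj_iff]
          constructor
          · intro h; have := congrArg Fin.val h; simp only [vtx_val] at this; omega
          · left; right; right; simp only [rel, vtx_val]; omega
      intro u v
      have hu := reachP u
      have hv := reachP v
      have hu0 := reachPath (u.val / 5) (idx_lt u)
      have hv0 := reachPath (v.val / 5) (idx_lt v)
      exact hu.trans (hu0.symm.trans (hv0.trans hv.symm))
    · exact ⟨⟨0, by omega⟩⟩
  · -- iota computation
    have upper : ∃ S : Set (Fin (5 * k)), IsIsolatingB2 (Gk k) S ∧ S.ncard = k := by
      refine ⟨{v | v.val % 5 = 3}, ?_, ?_⟩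
      · -- the role-3 vertices dominate everything
        have cover : ∀ v : Fin (5 * k), v ∈ closedNbhd (Gk k) {v | v.val % 5 = 3} := by
          intro v
          by_cases h3 : v.val % 5 = 3
          · exact Or.inl h3
          · right
            refine ⟨vtx (v.val / 5) 3 (idx_lt v) (by omega), by simp only [Set.mem_setOf_eq, vtx_val]; omega, ?_⟩
            rw [adj_iff]
            constructor
            · intro h; have := congrArg Fin.val h; simp only [vtx_val] at this; omega
            · left
              by_cases h4 : v.val % 5 = 4
              · right; left; simp only [rel, vtx_val]; omega
              · left; simp only [rel, vtx_val]; omega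
        intro ⟨f, _, _⟩
        exact (f 0).2 (cover (f 0).1)
      · -- S has k elements
        have himg : {v : Fin (5 * k) | v.val % 5 = 3} =
            (fun i : Fin k => (vtx i.val 3 i.isLt (by omega) : Fin (5 * k))) '' Set.univ := by
          ext v
          simp only [Set.mem_setOf_eq, Set.image_univ, Set.mem_range]
          constructor
          · intro hv
            refine ⟨⟨v.val / 5, idx_lt v⟩, ?_⟩
            apply Fin.ext; simp only [vtx_val]; omega
          · rintro ⟨i, rfl⟩; simp only [vtx_val]; omega
        rw [himg, Set.ncard_image_of_injective _ ?_, Set.ncard_univ, Nat.card_eq_fintype_card,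
          Fintype.card_fin]
        intro a b hab
        have := congrArg Fin.val hab
        simp only [vtx_val] at this
        exact Fin.ext (by omega)
    have lower : ∀ m ∈ {m | ∃ S : Set (Fin (5 * k)), IsIsolatingB2 (Gk k) S ∧ S.ncard = m},
        k ≤ m := by
      rintro m ⟨S, hiso, rfl⟩
      -- every copy contains a vertex of S
      have hit : ∀ i : Fin k, ∃ s, s ∈ S ∧ s.val / 5 = i.val := by
        intro i
        by_contra hno
        push_neg at hno
        apply hiso
        refine ⟨fun j => ⟨vtx i.val j.val i.isLt (by omega), ?_⟩, ?_, ?_⟩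
        · -- the clique vertex is not in N[S]
          intro hmem
          rcases hmem with hmem | ⟨u, huS, hadj⟩
          · exact hno _ hmem (by simp only [Set.mem_setOf_eq, vtx_val]; omega)
          · have hj4 : (vtx i.val j.val i.isLt (by omega) : Fin (5 * k)).val % 5 < 4 := by
              simp only [vtx_val]; have := j.isLt; omega
            have := adj_same_copy hadj hj4
            apply hno u huS
            simp only [vtx_val] at this
            omega
        · intro a b hab
          have := congrArg (fun x => (Subtype.val x : Fin (5 * k)).val) hab
          simp only [vtx_val] at this
          exact Fin.ext (by omega)
        · intro a b hab
          have hne : a ≠ b := hab.ne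
          have key : (Gk k).Adj (vtx i.val a.val i.isLt (by omega))
              (vtx i.val b.val i.isLt (by omega)) := by
            rw [adj_iff]
            constructor
            · intro h
              have := congrArg Fin.val h
              simp only [vtx_val] at this
              exact hne (Fin.ext (by omega))
            · left; left; simp only [rel, vtx_val]
              have := a.isLt; have := b.isLt
              omega
          exact key
      choose g hgS hgidx using hit
      have hginj : Function.Injective g := by
        intro a b hab
        apply Fin.ext
        rw [← hgidx a, ← hgidx b, hab]
      calc k = (Set.range g).ncard := by
              rw [← Set.image_univ, Set.ncard_image_of_injective _ hginj, Set.ncard_univ,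
                Nat.card_eq_fintype_card, Fintype.card_fin]
        _ ≤ S.ncard := Set.ncard_le_ncard (Set.range_subset_iff.mpr hgS) S.toFinite
    obtain ⟨S, hS, hScard⟩ := upper
    have hmem : k ∈ {m | ∃ S : Set (Fin (5 * k)), IsIsolatingB2 (Gk k) S ∧ S.ncard = m} :=
      ⟨S, hS, hScard⟩
    exact le_antisymm (Nat.sInf_le hmem) (le_csInf ⟨k, hmem⟩ lower)

end ExtremalB2

theorem exists_extremal_graph_iotaB2 (k : ℕ) (hk : 0 < k) :
    ∃ G : SimpleGraph (Fin (5 * k)), G.Connected ∧ iotaB2 G = k :=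
  ExtremalB2.main k hk
end

section
/- The exceptional graph Y (4-regular, 9 vertices, as in the paper) satisfies ι(Y, B2) = 2; in particular Y has no single vertex v with Y − N[v] diamond-free. -/
open SimpleGraph

lemma ygraph_adj (a b : ZMod 9) :
    Ygraph.Adj a b ↔ a ≠ b ∧ ((a - b = 1 ∨ a - b = 2) ∨ (b - a = 1 ∨ b - a = 2)) := by
  simp [Ygraph, fromRel_adj]

/-- Exhibit a diamond via four vertices. `a`, `b` are the nonadjacent pair. -/
lemma not_diamondFree_of_four {V : Type*} (G : SimpleGraph V) (a b c d : V)
    (hab : a ≠ b) (hac : a ≠ c) (had : a ≠ d) (hbc : b ≠ c) (hbd : b ≠ d) (hcd : c ≠ d)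
    (h1 : G.Adj a c) (h2 : G.Adj a d) (h3 : G.Adj b c) (h4 : G.Adj b d) (h5 : G.Adj c d) :
    ¬ DiamondFree G := by
  intro h
  apply h
  refine ⟨![a, b, c, d], ?_, ?_⟩
  · intro i j hij
    fin_cases i <;> fin_cases j <;> simp_all <;>
      first
        | rfl
        | exact absurd hij.symm (by assumption)
        | exact absurd hij (by assumption)
  · intro i j hij
    have : i ≠ j ∧ ¬ (s(i, j) = s((0 : Fin 4), 1)) := by
      simpa [Diamond, deleteEdges_adj, completeGraph_eq_top, top_adj] using hij
    obtain ⟨hne, hs⟩ := this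
    fin_cases i <;> fin_cases j <;> simp_all <;>
      first
        | exact h1 | exact h2 | exact h3 | exact h4 | exact h5
        | exact h1.symm | exact h2.symm | exact h3.symm | exact h4.symm | exact h5.symm
        | exact absurd rfl hne

lemma mem_compl_closed (v d : ZMod 9)
    (h0 : d ≠ 0) (h1 : d ≠ 1) (h2 : d ≠ 2) (h3 : -d ≠ 1) (h4 : -d ≠ 2) :
    v + d ∈ (closedNbhd Ygraph {v})ᶜ := by
  intro hmem
  rcases hmem with h | ⟨u, hu, hadj⟩
  · rw [Set.mem_singleton_iff] at h
    exact h0 (by linear_combination h)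
  · rw [Set.mem_singleton_iff] at hu
    rw [hu, ygraph_adj] at hadj
    have e1 : v - (v + d) = -d := by ring
    have e2 : v + d - v = d := by ring
    rw [e1, e2] at hadj
    rcases hadj.2 with (h | h) | (h | h)
    · exact h3 h
    · exact h4 h
    · exact h1 h
    · exact h2 h

lemma ygraph_adj_add (v a b : ZMod 9) (hne : a ≠ b)
    (h : a - b = 1 ∨ a - b = 2 ∨ b - a = 1 ∨ b - a = 2) : Ygraph.Adj (v + a) (v + b) := by
  rw [ygraph_adj]
  refine ⟨fun hh => hne (by linear_combination hh), ?_⟩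
  have e1 : v + a - (v + b) = a - b := by ring
  have e2 : v + b - (v + a) = b - a := by ring
  rw [e1, e2]
  tauto

lemma ygraph_one_not_isolating (v : ZMod 9) :
    ¬ DiamondFree (Ygraph.induce (closedNbhd Ygraph {v})ᶜ) := by
  have m3 : v + 3 ∈ (closedNbhd Ygraph {v})ᶜ := mem_compl_closed v 3 (by decide) (by decide) (by decide) (by decide) (by decide)
  have m4 : v + 4 ∈ (closedNbhd Ygraph {v})ᶜ := mem_compl_closed v 4 (by decide) (by decide) (by decide) (by decide) (by decide)
  have m5 : v + 5 ∈ (closedNbhd Ygraph {v})ᶜ := mem_compl_closed v 5 (by decide) (by decide) (by decide) (by decide) (by decide)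
  have m6 : v + 6 ∈ (closedNbhd Ygraph {v})ᶜ := mem_compl_closed v 6 (by decide) (by decide) (by decide) (by decide) (by decide)
  have key : ∀ a b : ZMod 9, a ≠ b → v + a ≠ v + b := by
    intro a b hab h
    exact hab (by linear_combination h)
  apply not_diamondFree_of_four (Ygraph.induce (closedNbhd Ygraph {v})ᶜ)
    ⟨v + 3, m3⟩ ⟨v + 6, m6⟩ ⟨v + 4, m4⟩ ⟨v + 5, m5⟩
  · simp only [ne_eq, Subtype.mk.injEq]; exact key 3 6 (by decide)
  · simp only [ne_eq, Subtype.mk.injEq]; exact key 3 4 (by decide)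
  · simp only [ne_eq, Subtype.mk.injEq]; exact key 3 5 (by decide)
  · simp only [ne_eq, Subtype.mk.injEq]; exact key 6 4 (by decide)
  · simp only [ne_eq, Subtype.mk.injEq]; exact key 6 5 (by decide)
  · simp only [ne_eq, Subtype.mk.injEq]; exact key 4 5 (by decide)
  · exact ygraph_adj_add v 3 4 (by decide) (by decide)
  · exact ygraph_adj_add v 3 5 (by decide) (by decide)
  · exact ygraph_adj_add v 6 4 (by decide) (by decide)
  · exact ygraph_adj_add v 6 5 (by decide) (by decide)
  · exact ygraph_adj_add v 4 5 (by decide) (by decide)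

lemma ygraph_empty_not_isolating :
    ¬ DiamondFree (Ygraph.induce (closedNbhd Ygraph (∅ : Set (ZMod 9)))ᶜ) := by
  have me : ∀ x : ZMod 9, x ∈ (closedNbhd Ygraph (∅ : Set (ZMod 9)))ᶜ := by
    intro x h
    rcases h with h | ⟨u, hu, _⟩
    · exact h
    · exact hu
  apply not_diamondFree_of_four (Ygraph.induce (closedNbhd Ygraph (∅ : Set (ZMod 9)))ᶜ)
    ⟨0, me 0⟩ ⟨3, me 3⟩ ⟨1, me 1⟩ ⟨2, me 2⟩
  · simp only [ne_eq, Subtype.mk.injEq]; decide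
  · simp only [ne_eq, Subtype.mk.injEq]; decide
  · simp only [ne_eq, Subtype.mk.injEq]; decide
  · simp only [ne_eq, Subtype.mk.injEq]; decide
  · simp only [ne_eq, Subtype.mk.injEq]; decide
  · simp only [ne_eq, Subtype.mk.injEq]; decide
  · exact (ygraph_adj 0 1).mpr (by decide)
  · exact (ygraph_adj 0 2).mpr (by decide)
  · exact (ygraph_adj 3 1).mpr (by decide)
  · exact (ygraph_adj 3 2).mpr (by decide)
  · exact (ygraph_adj 1 2).mpr (by decide)

theorem iotaB2_Ygraph_eq_two :
    iotaB2 Ygraph = 2 ∧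
      ¬ ∃ v : ZMod 9, DiamondFree (Ygraph.induce (closedNbhd Ygraph {v})ᶜ) := by
  constructor
  · -- main part
    have h2mem : (2 : ℕ) ∈ {k | ∃ S : Set (ZMod 9), IsIsolatingB2 Ygraph S ∧ S.ncard = k} := by
      refine ⟨{0, 4}, ?_, ?_⟩
      · -- N[{0,4}] = univ, complement empty
        have huniv : closedNbhd Ygraph {(0 : ZMod 9), 4} = Set.univ := by
          apply Set.eq_univ_iff_forall.mpr
          intro x
          have : x = 0 ∨ x = 4 ∨ Ygraph.Adj 0 x ∨ Ygraph.Adj 4 x := by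
            have := ygraph_adj 0 x
            have := ygraph_adj 4 x
            rcases ((by decide : ∀ x : ZMod 9, x = 0 ∨ x = 4 ∨
              ((0 : ZMod 9) ≠ x ∧ (((0:ZMod 9) - x = 1 ∨ (0:ZMod 9) - x = 2) ∨ (x - 0 = 1 ∨ x - 0 = 2))) ∨
              ((4 : ZMod 9) ≠ x ∧ (((4:ZMod 9) - x = 1 ∨ (4:ZMod 9) - x = 2) ∨ (x - 4 = 1 ∨ x - 4 = 2)))) x) with
              h | h | h | h
            · exact Or.inl h
            · exact Or.inr (Or.inl h)
            · exact Or.inr (Or.inr (Or.inl ((ygraph_adj 0 x).mpr h)))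
            · exact Or.inr (Or.inr (Or.inr ((ygraph_adj 4 x).mpr h)))
          rcases this with h | h | h | h
          · exact Or.inl (Or.inl h)
          · exact Or.inl (Or.inr h)
          · exact Or.inr ⟨0, Or.inl rfl, h⟩
          · exact Or.inr ⟨4, Or.inr rfl, h⟩
        intro ⟨f, _, _⟩
        exact (f 0).2 (Set.eq_univ_iff_forall.mp huniv _)
      · exact Set.ncard_pair (by decide)
    refine le_antisymm (Nat.sInf_le h2mem) (le_csInf ⟨2, h2mem⟩ ?_)
    rintro k ⟨S, hS, rfl⟩
    by_contra hlt
    push_neg at hlt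
    interval_cases h : S.ncard
    · -- S = ∅
      have hSe : S = ∅ := (Set.ncard_eq_zero (Set.toFinite S)).mp h
      subst hSe
      exact ygraph_empty_not_isolating hS
    · obtain ⟨v, rfl⟩ := Set.ncard_eq_one.mp h
      exact ygraph_one_not_isolating v hS
  · rintro ⟨v, hv⟩
    exact ygraph_one_not_isolating v hv
end

section
/- If G is a connected graph of order 8 with maximum degree 3 that contains the diamond graph, then ι(G, B2) = 1. -/
open SimpleGraph

set_option maxHeartbeats 1000000
set_option maxRecDepth 100000

lemma dadj : ∀ i j : Fin 4, i ≠ j → ¬(i = 0 ∧ j = 1) → ¬(i = 1 ∧ j = 0) → Diamond.Adj i j := by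
  intro i j h1 h2 h3; simp [Diamond]; tauto

lemma key4 : ∀ k m m' : Fin 4, k ≠ m → k ≠ m' → m ≠ m' →
    Diamond.Adj k m ∨ Diamond.Adj k m' := by
  intro k m m' h1 h2 h3
  simp [Diamond]
  fin_cases k <;> fin_cases m <;> fin_cases m' <;> simp_all

/-- A vertex of degree ≤ 3 with three distinct neighbours has exactly those neighbours. -/
lemma nbhd3 {V : Type*} [Fintype V] (G : SimpleGraph V) [DecidableRel G.Adj]
    (hΔ : G.maxDegree = 3) (v n1 n2 n3 : V)
    (h1 : G.Adj v n1) (h2 : G.Adj v n2) (h3 : G.Adj v n3)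
    (e12 : n1 ≠ n2) (e13 : n1 ≠ n3) (e23 : n2 ≠ n3) :
    ∀ w, G.Adj v w → w = n1 ∨ w = n2 ∨ w = n3 := by
  classical
  intro w hw
  have hsub : ({n1, n2, n3} : Finset V) ⊆ G.neighborFinset v := by
    intro x hx
    simp only [Finset.mem_insert, Finset.mem_singleton] at hx
    rw [SimpleGraph.mem_neighborFinset]
    rcases hx with rfl | rfl | rfl
    · exact h1
    · exact h2
    · exact h3
  have hdeg : (G.neighborFinset v).card ≤ 3 := by
    have := G.degree_le_maxDegree v
    rw [hΔ] at this
    exact this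
  have hcard : 3 ≤ ({n1, n2, n3} : Finset V).card := by
    rw [Finset.card_insert_of_notMem (by simp [e12, e13]),
      Finset.card_insert_of_notMem (by simp [e23]), Finset.card_singleton]
  have heq : ({n1, n2, n3} : Finset V) = G.neighborFinset v :=
    Finset.eq_of_subset_of_card_le hsub (le_trans hdeg hcard)
  have : w ∈ ({n1, n2, n3} : Finset V) := by
    rw [heq]; simpa [SimpleGraph.mem_neighborFinset]
  simpa using this

/-- Along a walk leaving a set there is a crossing edge. -/
lemma cross_edge {V : Type*} (G : SimpleGraph V) (A : Set V) :
    ∀ {u v : V}, G.Walk u v → u ∈ A → v ∉ A →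
      ∃ p q, p ∈ A ∧ q ∉ A ∧ G.Adj p q := by
  intro u v w
  induction w with
  | nil => intro hu hv; exact absurd hu hv
  | @cons u w v huw _ ih =>
    intro hu hv
    by_cases hw : w ∈ A
    · exact ih hw hv
    · exact ⟨u, w, hu, hw, huw⟩

lemma key_isolating {V : Type*} [Fintype V] (G : SimpleGraph V) [DecidableRel G.Adj]
    (x0 x1 x2 x3 a b c d : V)
    (hcover : ∀ v : V, v = x0 ∨ v = x1 ∨ v = x2 ∨ v = x3 ∨ v = a ∨ v = b ∨ v = c ∨ v = d)
    (h02 : G.Adj x0 x2) (h03 : G.Adj x0 x3) (h0a : G.Adj x0 a)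
    (e1b : x1 ≠ b) (e1c : x1 ≠ c) (e1d : x1 ≠ d) (ebc : b ≠ c) (ebd : b ≠ d) (ecd : c ≠ d)
    (hcx1 : ¬ G.Adj c x1) (hdx1 : ¬ G.Adj d x1) :
    IsIsolatingB2 G {x0} := by
  classical
  unfold IsIsolatingB2 DiamondFree
  intro hcon
  obtain ⟨h, hinj, hadj⟩ := hcon
  have hT : ∀ v : ((closedNbhd G ({x0} : Set V))ᶜ : Set V),
      (v : V) = x1 ∨ (v : V) = b ∨ (v : V) = c ∨ (v : V) = d := by
    rintro ⟨v, hv⟩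
    rcases hcover v with rfl | rfl | rfl | rfl | rfl | rfl | rfl | rfl
    · exact absurd (Or.inl rfl) hv
    · exact Or.inl rfl
    · exact absurd (Or.inr ⟨x0, rfl, h02⟩) hv
    · exact absurd (Or.inr ⟨x0, rfl, h03⟩) hv
    · exact absurd (Or.inr ⟨x0, rfl, h0a⟩) hv
    · exact Or.inr (Or.inl rfl)
    · exact Or.inr (Or.inr (Or.inl rfl))
    · exact Or.inr (Or.inr (Or.inr rfl))
  set h' : Fin 4 → V := fun i => ((h i : _) : V) with hh'
  have hinj' : Function.Injective h' := fun i j hij => hinj (Subtype.ext hij)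
  have hrange : Set.range h' = {x1, b, c, d} := by
    refine Set.eq_of_subset_of_ncard_le ?_ ?_ (Set.toFinite _)
    · rintro v ⟨i, rfl⟩
      rcases hT (h i) with h | h | h | h <;> simp [hh', h, Set.mem_insert_iff]
    · have hr : (Set.range h').ncard = 4 := by
        rw [← Set.image_univ, Set.ncard_image_of_injective _ hinj', Set.ncard_univ]
        simp
      have ht : ({x1, b, c, d} : Set V).ncard = 4 := by
        rw [Set.ncard_insert_of_notMem (by simp [e1b, e1c, e1d]),
          Set.ncard_insert_of_notMem (by simp [ebc, ebd]),
          Set.ncard_insert_of_notMem (by simp [ecd]), Set.ncard_singleton]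
      rw [hr, ht]
  have hx1r : x1 ∈ Set.range h' := by rw [hrange]; simp
  have hcr : c ∈ Set.range h' := by rw [hrange]; simp
  have hdr : d ∈ Set.range h' := by rw [hrange]; simp
  obtain ⟨k, hk⟩ := hx1r
  obtain ⟨m, hm⟩ := hcr
  obtain ⟨m', hm'⟩ := hdr
  have hkm : k ≠ m := by rintro rfl; exact e1c (hk ▸ hm ▸ rfl)
  have hkm' : k ≠ m' := by rintro rfl; exact e1d (hk ▸ hm' ▸ rfl)
  have hmm' : m ≠ m' := by rintro rfl; exact ecd (hm ▸ hm' ▸ rfl)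
  rcases key4 k m m' hkm hkm' hmm' with hD | hD
  · have hGA : G.Adj (h' k) (h' m) := hadj k m hD
    rw [hk, hm] at hGA
    exact hcx1 hGA.symm
  · have hGA : G.Adj (h' k) (h' m') := hadj k m' hD
    rw [hk, hm'] at hGA
    exact hdx1 hGA.symm

theorem iotaB2_eq_one_of_order_eight {V : Type*} [Fintype V] (G : SimpleGraph V)
    [DecidableRel G.Adj] (hconn : G.Connected) (hn : Fintype.card V = 8)
    (hΔ : G.maxDegree = 3) (hdiamond : ContainsSub G Diamond) :
    iotaB2 G = 1 := by
  classical
  obtain ⟨f, finj, fadj⟩ := hdiamond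
  suffices hex : ∃ v : V, IsIsolatingB2 G {v} by
    obtain ⟨v, hv⟩ := hex
    have h1 : 1 ∈ {k | ∃ S : Set V, IsIsolatingB2 G S ∧ S.ncard = k} :=
      ⟨{v}, hv, Set.ncard_singleton v⟩
    have h0 : 0 ∉ {k | ∃ S : Set V, IsIsolatingB2 G S ∧ S.ncard = k} := by
      rintro ⟨S, hS, hS0⟩
      have hSe : S = ∅ := (Set.ncard_eq_zero S.toFinite).mp hS0
      subst hSe
      have hcn : closedNbhd G (∅ : Set V) = ∅ := by
        ext v; simp [closedNbhd]
      apply hS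
      refine ⟨fun i => ⟨f i, by simp [hcn]⟩, fun i j e => finj (congrArg Subtype.val e),
        fun i j hD => ?_⟩
      exact fadj i j hD
    have hne : {k | ∃ S : Set V, IsIsolatingB2 G S ∧ S.ncard = k}.Nonempty := ⟨1, h1⟩
    have hmem := Nat.sInf_mem hne
    have hle := Nat.sInf_le h1
    have hnz : sInf {k | ∃ S : Set V, IsIsolatingB2 G S ∧ S.ncard = k} ≠ 0 := by
      intro e; exact h0 (e ▸ hmem)
    unfold iotaB2
    omega
  -- names
  have a02 : G.Adj (f 0) (f 2) := fadj 0 2 (dadj 0 2 (by decide) (by decide) (by decide))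
  have a03 : G.Adj (f 0) (f 3) := fadj 0 3 (dadj 0 3 (by decide) (by decide) (by decide))
  have a12 : G.Adj (f 1) (f 2) := fadj 1 2 (dadj 1 2 (by decide) (by decide) (by decide))
  have a13 : G.Adj (f 1) (f 3) := fadj 1 3 (dadj 1 3 (by decide) (by decide) (by decide))
  have a23 : G.Adj (f 2) (f 3) := fadj 2 3 (dadj 2 3 (by decide) (by decide) (by decide))
  have fne : ∀ i j : Fin 4, i ≠ j → f i ≠ f j := fun i j hij e => hij (finj e)
  have hx2nb : ∀ w, G.Adj (f 2) w → w = f 0 ∨ w = f 1 ∨ w = f 3 :=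
    nbhd3 G hΔ (f 2) (f 0) (f 1) (f 3) a02.symm a12.symm a23
      (fne 0 1 (by decide)) (fne 0 3 (by decide)) (fne 1 3 (by decide))
  have hx3nb : ∀ w, G.Adj (f 3) w → w = f 0 ∨ w = f 1 ∨ w = f 2 :=
    nbhd3 G hΔ (f 3) (f 0) (f 1) (f 2) a03.symm a13.symm a23.symm
      (fne 0 1 (by decide)) (fne 0 2 (by decide)) (fne 1 2 (by decide))
  by_cases hfree : IsIsolatingB2 G ({f 2} : Set V)
  · exact ⟨f 2, hfree⟩
  have hcon : ContainsSub (G.induce (closedNbhd G ({f 2} : Set V))ᶜ) Diamond := by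
    by_contra hc; exact hfree hc
  obtain ⟨g, ginj, gadj⟩ := hcon
  have gmem : ∀ i : Fin 4, ((g i : _) : V) ∉ closedNbhd G ({f 2} : Set V) := fun i => (g i).2
  -- g i distinct from all f j
  have cross : ∀ i : Fin 4, ((g i : _) : V) ≠ f 0 ∧ ((g i : _) : V) ≠ f 1 ∧
      ((g i : _) : V) ≠ f 2 ∧ ((g i : _) : V) ≠ f 3 := by
    intro i
    refine ⟨fun e => gmem i (Or.inr ⟨f 2, rfl, e ▸ a02.symm⟩),
      fun e => gmem i (Or.inr ⟨f 2, rfl, e ▸ a12.symm⟩),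
      fun e => gmem i (Or.inl e),
      fun e => gmem i (Or.inr ⟨f 2, rfl, e ▸ a23⟩)⟩
  have gne : ∀ i j : Fin 4, i ≠ j → ((g i : _) : V) ≠ ((g j : _) : V) :=
    fun i j hij e => hij (ginj (Subtype.ext e))
  have gA : ∀ i j : Fin 4, Diamond.Adj i j → G.Adj ((g i : _) : V) ((g j : _) : V) :=
    fun i j hD => gadj i j hD
  have bac : G.Adj ((g 2 : _) : V) ((g 0 : _) : V) := gA 2 0 (dadj 2 0 (by decide) (by decide) (by decide))
  have bbc : G.Adj ((g 2 : _) : V) ((g 1 : _) : V) := gA 2 1 (dadj 2 1 (by decide) (by decide) (by decide))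
  have bcd : G.Adj ((g 2 : _) : V) ((g 3 : _) : V) := gA 2 3 (dadj 2 3 (by decide) (by decide) (by decide))
  have bad : G.Adj ((g 3 : _) : V) ((g 0 : _) : V) := gA 3 0 (dadj 3 0 (by decide) (by decide) (by decide))
  have bbd : G.Adj ((g 3 : _) : V) ((g 1 : _) : V) := gA 3 1 (dadj 3 1 (by decide) (by decide) (by decide))
  have hcnb : ∀ w, G.Adj ((g 2 : _) : V) w →
      w = ((g 0 : _) : V) ∨ w = ((g 1 : _) : V) ∨ w = ((g 3 : _) : V) :=
    nbhd3 G hΔ _ _ _ _ bac bbc bcd (gne 0 1 (by decide)) (gne 0 3 (by decide)) (gne 1 3 (by decide))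
  have hdnb : ∀ w, G.Adj ((g 3 : _) : V) w →
      w = ((g 0 : _) : V) ∨ w = ((g 1 : _) : V) ∨ w = ((g 2 : _) : V) :=
    nbhd3 G hΔ _ _ _ _ bad bbd bcd.symm (gne 0 1 (by decide)) (gne 0 2 (by decide)) (gne 1 2 (by decide))
  -- coverage
  have hcover : ∀ v : V, v = f 0 ∨ v = f 1 ∨ v = f 2 ∨ v = f 3 ∨
      v = ((g 0 : _) : V) ∨ v = ((g 1 : _) : V) ∨ v = ((g 2 : _) : V) ∨ v = ((g 3 : _) : V) := by
    have hcard : ({f 0, f 1, f 2, f 3, ((g 0 : _) : V), ((g 1 : _) : V), ((g 2 : _) : V),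
        ((g 3 : _) : V)} : Finset V).card = 8 := by
      rw [Finset.card_insert_of_notMem (by
          simp only [Finset.mem_insert, Finset.mem_singleton]
          push_neg
          exact ⟨fne 0 1 (by decide), fne 0 2 (by decide), fne 0 3 (by decide),
            (cross 0).1.symm, (cross 1).1.symm, (cross 2).1.symm, (cross 3).1.symm⟩),
        Finset.card_insert_of_notMem (by
          simp only [Finset.mem_insert, Finset.mem_singleton]
          push_neg
          exact ⟨fne 1 2 (by decide), fne 1 3 (by decide),
            (cross 0).2.1.symm, (cross 1).2.1.symm, (cross 2).2.1.symm, (cross 3).2.1.symm⟩),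
        Finset.card_insert_of_notMem (by
          simp only [Finset.mem_insert, Finset.mem_singleton]
          push_neg
          exact ⟨fne 2 3 (by decide),
            (cross 0).2.2.1.symm, (cross 1).2.2.1.symm, (cross 2).2.2.1.symm, (cross 3).2.2.1.symm⟩),
        Finset.card_insert_of_notMem (by
          simp only [Finset.mem_insert, Finset.mem_singleton]
          push_neg
          exact ⟨(cross 0).2.2.2.symm, (cross 1).2.2.2.symm, (cross 2).2.2.2.symm,
            (cross 3).2.2.2.symm⟩),
        Finset.card_insert_of_notMem (by
          simp only [Finset.mem_insert, Finset.mem_singleton]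
          push_neg
          exact ⟨gne 0 1 (by decide), gne 0 2 (by decide), gne 0 3 (by decide)⟩),
        Finset.card_insert_of_notMem (by
          simp only [Finset.mem_insert, Finset.mem_singleton]
          push_neg
          exact ⟨gne 1 2 (by decide), gne 1 3 (by decide)⟩),
        Finset.card_insert_of_notMem (by
          simp only [Finset.mem_singleton]
          exact gne 2 3 (by decide)),
        Finset.card_singleton]
    have huniv : ({f 0, f 1, f 2, f 3, ((g 0 : _) : V), ((g 1 : _) : V), ((g 2 : _) : V),
        ((g 3 : _) : V)} : Finset V) = Finset.univ :=
      Finset.eq_univ_of_card _ (by rw [hcard, hn])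
    intro v
    have : v ∈ ({f 0, f 1, f 2, f 3, ((g 0 : _) : V), ((g 1 : _) : V), ((g 2 : _) : V),
        ((g 3 : _) : V)} : Finset V) := huniv ▸ Finset.mem_univ v
    simpa [Finset.mem_insert, Finset.mem_singleton] using this
  -- crossing edge
  obtain ⟨w⟩ := hconn.preconnected (f 2) ((g 0 : _) : V)
  obtain ⟨p, q, hp, hq, hpq⟩ := cross_edge G ({f 0, f 1, f 2, f 3} : Set V) w
    (by simp) (by
      simp only [Set.mem_insert_iff, Set.mem_singleton_iff]
      push_neg
      exact ⟨(cross 0).1, (cross 0).2.1, (cross 0).2.2.1, (cross 0).2.2.2⟩)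
  -- q is one of g's vertices
  have hq4 : q = ((g 0 : _) : V) ∨ q = ((g 1 : _) : V) ∨ q = ((g 2 : _) : V) ∨
      q = ((g 3 : _) : V) := by
    rcases hcover q with h | h | h | h | h | h | h | h
    · exact absurd (by simp [h]) hq
    · exact absurd (by simp [h]) hq
    · exact absurd (by simp [h]) hq
    · exact absurd (by simp [h]) hq
    · exact Or.inl h
    · exact Or.inr (Or.inl h)
    · exact Or.inr (Or.inr (Or.inl h))
    · exact Or.inr (Or.inr (Or.inr h))
  -- q is not g2 or g3
  have hqab : q = ((g 0 : _) : V) ∨ q = ((g 1 : _) : V) := by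
    rcases hq4 with h | h | h | h
    · exact Or.inl h
    · exact Or.inr h
    · subst h
      rcases hcnb p hpq.symm with rfl | rfl | rfl
      · exact absurd hp (by
          simp only [Set.mem_insert_iff, Set.mem_singleton_iff]
          push_neg
          exact ⟨(cross 0).1, (cross 0).2.1, (cross 0).2.2.1, (cross 0).2.2.2⟩)
      · exact absurd hp (by
          simp only [Set.mem_insert_iff, Set.mem_singleton_iff]
          push_neg
          exact ⟨(cross 1).1, (cross 1).2.1, (cross 1).2.2.1, (cross 1).2.2.2⟩)
      · exact absurd hp (by
          simp only [Set.mem_insert_iff, Set.mem_singleton_iff]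
          push_neg
          exact ⟨(cross 3).1, (cross 3).2.1, (cross 3).2.2.1, (cross 3).2.2.2⟩)
    · subst h
      rcases hdnb p hpq.symm with rfl | rfl | rfl
      · exact absurd hp (by
          simp only [Set.mem_insert_iff, Set.mem_singleton_iff]
          push_neg
          exact ⟨(cross 0).1, (cross 0).2.1, (cross 0).2.2.1, (cross 0).2.2.2⟩)
      · exact absurd hp (by
          simp only [Set.mem_insert_iff, Set.mem_singleton_iff]
          push_neg
          exact ⟨(cross 1).1, (cross 1).2.1, (cross 1).2.2.1, (cross 1).2.2.2⟩)
      · exact absurd hp (by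
          simp only [Set.mem_insert_iff, Set.mem_singleton_iff]
          push_neg
          exact ⟨(cross 2).1, (cross 2).2.1, (cross 2).2.2.1, (cross 2).2.2.2⟩)
  -- p is not f2 or f3
  have hp01 : p = f 0 ∨ p = f 1 := by
    have hqn : q ≠ f 0 ∧ q ≠ f 1 ∧ q ≠ f 3 := by
      rcases hqab with rfl | rfl
      · exact ⟨(cross 0).1, (cross 0).2.1, (cross 0).2.2.2⟩
      · exact ⟨(cross 1).1, (cross 1).2.1, (cross 1).2.2.2⟩
    simp only [Set.mem_insert_iff, Set.mem_singleton_iff] at hp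
    rcases hp with rfl | rfl | rfl | rfl
    · exact Or.inl rfl
    · exact Or.inr rfl
    · rcases hx2nb q hpq with h | h | h
      · exact absurd h hqn.1
      · exact absurd h hqn.2.1
      · exact absurd h hqn.2.2
    · rcases hx3nb q hpq with h | h | h
      · exact absurd h hqn.1
      · exact absurd h hqn.2.1
      · rcases hqab with rfl | rfl
        · exact absurd h (cross 0).2.2.1
        · exact absurd h (cross 1).2.2.1
  -- c and d are not adjacent to f 0 or f 1
  have hcnadj : ∀ x, x = f 0 ∨ x = f 1 → ¬ G.Adj ((g 2 : _) : V) x := by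
    rintro x hx hA
    rcases hcnb x hA with rfl | rfl | rfl
    · rcases hx with h | h
      · exact (cross 0).1 h
      · exact (cross 0).2.1 h
    · rcases hx with h | h
      · exact (cross 1).1 h
      · exact (cross 1).2.1 h
    · rcases hx with h | h
      · exact (cross 3).1 h
      · exact (cross 3).2.1 h
  have hdnadj : ∀ x, x = f 0 ∨ x = f 1 → ¬ G.Adj ((g 3 : _) : V) x := by
    rintro x hx hA
    rcases hdnb x hA with rfl | rfl | rfl
    · rcases hx with h | h
      · exact (cross 0).1 h
      · exact (cross 0).2.1 h
    · rcases hx with h | h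
      · exact (cross 1).1 h
      · exact (cross 1).2.1 h
    · rcases hx with h | h
      · exact (cross 2).1 h
      · exact (cross 2).2.1 h
  rcases hp01 with rfl | rfl
  · -- p = f 0
    rcases hqab with rfl | rfl
    · -- q = g 0
      refine ⟨f 0, key_isolating G (f 0) (f 1) (f 2) (f 3)
        ((g 0 : _) : V) ((g 1 : _) : V) ((g 2 : _) : V) ((g 3 : _) : V)
        hcover a02 a03 hpq
        ((cross 1).2.1.symm) ((cross 2).2.1.symm) ((cross 3).2.1.symm)
        (gne 1 2 (by decide)) (gne 1 3 (by decide)) (gne 2 3 (by decide))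
        (hcnadj (f 1) (Or.inr rfl)) (hdnadj (f 1) (Or.inr rfl))⟩
    · -- q = g 1
      refine ⟨f 0, key_isolating G (f 0) (f 1) (f 2) (f 3)
        ((g 1 : _) : V) ((g 0 : _) : V) ((g 2 : _) : V) ((g 3 : _) : V)
        (fun v => by rcases hcover v with h | h | h | h | h | h | h | h <;> tauto)
        a02 a03 hpq
        ((cross 0).2.1.symm) ((cross 2).2.1.symm) ((cross 3).2.1.symm)
        (gne 0 2 (by decide)) (gne 0 3 (by decide)) (gne 2 3 (by decide))
        (hcnadj (f 1) (Or.inr rfl)) (hdnadj (f 1) (Or.inr rfl))⟩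
  · -- p = f 1
    rcases hqab with rfl | rfl
    · refine ⟨f 1, key_isolating G (f 1) (f 0) (f 2) (f 3)
        ((g 0 : _) : V) ((g 1 : _) : V) ((g 2 : _) : V) ((g 3 : _) : V)
        (fun v => by rcases hcover v with h | h | h | h | h | h | h | h <;> tauto)
        a12 a13 hpq
        ((cross 1).1.symm) ((cross 2).1.symm) ((cross 3).1.symm)
        (gne 1 2 (by decide)) (gne 1 3 (by decide)) (gne 2 3 (by decide))
        (hcnadj (f 0) (Or.inl rfl)) (hdnadj (f 0) (Or.inl rfl))⟩
    · refine ⟨f 1, key_isolating G (f 1) (f 0) (f 2) (f 3)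
        ((g 1 : _) : V) ((g 0 : _) : V) ((g 2 : _) : V) ((g 3 : _) : V)
        (fun v => by rcases hcover v with h | h | h | h | h | h | h | h <;> tauto)
        a12 a13 hpq
        ((cross 0).1.symm) ((cross 2).1.symm) ((cross 3).1.symm)
        (gne 0 2 (by decide)) (gne 0 3 (by decide)) (gne 2 3 (by decide))
        (hcnadj (f 0) (Or.inl rfl)) (hdnadj (f 0) (Or.inl rfl))⟩
end
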